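/- Fix d ≥ 1, let c_d = 2d, and let m be a positive integer. Let ℳ_m := {(m₁,…,m_d) ∈ ℕ^d : m₁+⋯+m_d = m, and each m_j is a positive multiple of c_d}, and for M = (m₁,…,m_d) ∈ ℳ_m let ℐ_M := {(i₁,…,i_d) : 0 ≤ i_j ≤ 2^{m_j} − 1 for each j}. With A_{m_j,i_j} defined from the shifted Legendre polynomial ℒ₂ as in the context, for any coefficients α_{M,I}, β_{M,I} ∈ {0,1} the quantity (**) := (1/|ℳ_m|²) ∑_{M ≠ M̃ ∈ ℳ_m} ∫_{[0,1]^d} (∑_{I ∈ ℐ_M} (α_{M,I} − β_{M,I}) ∏_{j=1}^d A_{m_j,i_j}(x_j)) · (∑_{Ĩ ∈ ℐ_{M̃}} (α_{M̃,Ĩ} − β_{M̃,Ĩ}) ∏_{j=1}^d A_{m̃_j,ĩ_j}(x_j)) dx satisfies |(**)| ≤ (2/3)·(1/210)^d · 2^{−2m}/|ℳ_m|. -/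

import Mathlib

open MeasureTheory Real Set
open scoped BigOperators Classical

noncomputable section

/-- the shifted Legendre polynomial of order 2 on `[0,1]` -/
def legendre2 (u : ℝ) : ℝ := 6 * u ^ 2 - 6 * u + 1

/-- `s_{m,i}(u) = ℒ₂(2^m u - i)` supported on `[i 2^{-m}, (i+1) 2^{-m}]` -/
def sLeg (m i : ℕ) (u : ℝ) : ℝ :=
  if (i : ℝ) / 2 ^ m ≤ u ∧ u ≤ ((i : ℝ) + 1) / 2 ^ m then legendre2 (2 ^ m * u - i) else 0

/-- `A_{m,i}(x) = ∫_x^{(i+1)2^{-m}} s_{m,i}(u) du` -/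
def ALeg (m i : ℕ) (x : ℝ) : ℝ := ∫ u in x..(((i : ℝ) + 1) / 2 ^ m), sLeg m i u

/-- `ℳ_m`: tuples `(m₁,…,m_d)` of positive multiples of `c_d = 2d` summing to `m`. -/
def MMset (d m : ℕ) : Finset (Fin d → ℕ) :=
  (Fintype.piFinset fun _ : Fin d => Finset.range (m + 1)).filter
    (fun f => (∑ j, f j) = m ∧ ∀ j, 0 < f j ∧ (2 * d) ∣ f j)

/-- `ℐ_M`: index tuples `(i₁,…,i_d)` with `0 ≤ i_j ≤ 2^{m_j} - 1`. -/
def IIset (d : ℕ) (M : Fin d → ℕ) : Finset (Fin d → ℕ) :=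
  Fintype.piFinset fun j => Finset.range (2 ^ M j)


def Qp (t : ℝ) : ℝ := -(2*t^3 - 3*t^2 + t)

lemma cont_leg (c e : ℝ) : Continuous (fun u : ℝ => legendre2 (c*u - e)) := by
  unfold legendre2; continuity

lemma sLeg_eq_ind (m i : ℕ) : sLeg m i =
    (Icc ((i:ℝ)/2^m) (((i:ℝ)+1)/2^m)).indicator (fun u => legendre2 (2^m*u - i)) := by
  funext u
  simp only [sLeg, Set.indicator_apply, Set.mem_Icc]

lemma sLeg_integrable (m i : ℕ) : Integrable (sLeg m i) := by
  rw [sLeg_eq_ind]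
  exact ((cont_leg _ _).integrableOn_Icc).integrable_indicator measurableSet_Icc

lemma hasDerivAt_F (c e : ℝ) (u : ℝ) :
    HasDerivAt (fun u : ℝ => c⁻¹ * (2*(c*u-e)^3 - 3*(c*u-e)^2 + (c*u-e)))
      (c * c⁻¹ * legendre2 (c*u-e)) u := by
  have h1 : HasDerivAt (fun u : ℝ => c*u-e) c u := by
    simpa using ((hasDerivAt_id u).const_mul c).sub_const e
  have h2 : HasDerivAt (fun t : ℝ => c⁻¹ * (2*t^3 - 3*t^2 + t))
      (c⁻¹ * (6*(c*u-e)^2 - 6*(c*u-e) + 1)) (c*u-e) := by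
    have : HasDerivAt (fun t : ℝ => 2*t^3 - 3*t^2 + t) (6*(c*u-e)^2 - 6*(c*u-e) + 1) (c*u-e) := by
      have := (((hasDerivAt_pow 3 (c*u-e)).const_mul 2).sub
        ((hasDerivAt_pow 2 (c*u-e)).const_mul 3)).add (hasDerivAt_id (c*u-e))
      exact this.congr_deriv (by push_cast; ring)
    exact this.const_mul _
  have := h2.comp u h1
  refine this.congr_deriv ?_
  · unfold legendre2; ring


lemma Qp_zero : Qp 0 = 0 := by simp [Qp]
lemma Qp_one : Qp 1 = 0 := by norm_num [Qp]

lemma integral_leg (m : ℕ) (i : ℕ) (x y : ℝ) :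
    ∫ u in x..y, legendre2 ((2^m:ℝ)*u - i) =
      ((2^m:ℝ))⁻¹ * (2*((2^m:ℝ)*y-i)^3 - 3*((2^m:ℝ)*y-i)^2 + ((2^m:ℝ)*y-i))
      - ((2^m:ℝ))⁻¹ * (2*((2^m:ℝ)*x-i)^3 - 3*((2^m:ℝ)*x-i)^2 + ((2^m:ℝ)*x-i)) := by
  have hc0 : ((2:ℝ)^m) ≠ 0 := by positivity
  have := intervalIntegral.integral_eq_sub_of_hasDerivAt
    (f := fun u : ℝ => ((2^m:ℝ))⁻¹ * (2*((2^m:ℝ)*u-i)^3 - 3*((2^m:ℝ)*u-i)^2 + ((2^m:ℝ)*u-i)))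
    (f' := fun u : ℝ => legendre2 ((2^m:ℝ)*u - i)) (a := x) (b := y)
    (fun u _ => by simpa [mul_inv_cancel₀ hc0] using hasDerivAt_F ((2:ℝ)^m) i u)
    ((cont_leg _ _).intervalIntegrable x y)
  simpa using this

lemma ALeg_eq (m i : ℕ) (x : ℝ) :
    ALeg m i x = if (i:ℝ)/2^m ≤ x ∧ x ≤ ((i:ℝ)+1)/2^m then (2^m:ℝ)⁻¹ * Qp (2^m*x - i) else 0 := by
  have hc0 : (0:ℝ) < 2^m := by positivity
  set a : ℝ := (i:ℝ)/2^m with ha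
  set b : ℝ := ((i:ℝ)+1)/2^m with hb
  have hab : a ≤ b := by
    rw [ha, hb]; gcongr; linarith
  have hca : (2^m:ℝ) * a - i = 0 := by
    rw [ha]; field_simp; ring
  have hcb : (2^m:ℝ) * b - i = 1 := by
    rw [hb]; field_simp; ring
  -- ae equality with Ioo indicator
  have hae : sLeg m i =ᵐ[volume] (Ioo a b).indicator (fun u => legendre2 (2^m*u - i)) := by
    rw [sLeg_eq_ind]
    exact (indicator_ae_eq_of_ae_eq_set Ioo_ae_eq_Icc).symm
  have key_mid : ∀ y z : ℝ, a ≤ y → z ≤ b → y ≤ z → (∫ u in y..z, sLeg m i u) =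
      (2^m:ℝ)⁻¹ * (2*((2^m:ℝ)*z-i)^3 - 3*((2^m:ℝ)*z-i)^2 + ((2^m:ℝ)*z-i))
      - (2^m:ℝ)⁻¹ * (2*((2^m:ℝ)*y-i)^3 - 3*((2^m:ℝ)*y-i)^2 + ((2^m:ℝ)*y-i)) := by
    intro y z hy hz hyz
    rw [← integral_leg m i y z]
    apply intervalIntegral.integral_congr
    intro u hu
    rw [Set.uIcc_of_le hyz] at hu
    have h1 : a ≤ u := le_trans hy hu.1
    have h2 : u ≤ b := le_trans hu.2 hz
    simp only [sLeg, ha, hb] at *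
    rw [if_pos ⟨h1, h2⟩]
  have key_out : ∀ y z : ℝ, y ≤ z → (z ≤ a ∨ b ≤ y) → (∫ u in y..z, sLeg m i u) = 0 := by
    intro y z hyz' hyz
    rw [intervalIntegral.integral_congr_ae (hae.mono (fun u hu _ => hu))]
    rw [intervalIntegral.integral_congr (g := fun _ => (0:ℝ)), intervalIntegral.integral_zero]
    intro u hu
    rw [Set.uIcc_of_le hyz', Set.mem_Icc] at hu
    have : u ∉ Ioo a b := by
      rcases hyz with h | h
      · rintro ⟨h1, h2⟩; linarith [hu.2.trans h]
      · rintro ⟨h1, h2⟩; linarith [h.trans hu.1]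
    simp [Set.indicator_apply, this]
  have hii : ∀ y z : ℝ, IntervalIntegrable (sLeg m i) volume y z :=
    fun y z => (sLeg_integrable m i).intervalIntegrable
  unfold ALeg
  rcases le_or_gt x a with hxa | hxa
  · -- x ≤ a : split at a
    rw [← intervalIntegral.integral_add_adjacent_intervals (hii x a) (hii a b), key_out x a hxa (Or.inl le_rfl),
      key_mid a b le_rfl le_rfl hab, hca, hcb]
    rcases eq_or_lt_of_le hxa with rfl | hxa'
    · rw [if_pos ⟨le_rfl, hab⟩, hca, Qp_zero]; ring
    · rw [if_neg (by push_neg; intro h; linarith)]; ring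
  · rcases le_or_gt x b with hxb | hxb
    · rw [key_mid x b hxa.le le_rfl hxb, hcb, if_pos ⟨hxa.le, hxb⟩]
      unfold Qp; ring
    · rw [if_neg (by push_neg; intro h; linarith), ← neg_eq_zero, ← intervalIntegral.integral_symm]
      exact key_out b x hxb.le (Or.inr le_rfl)

lemma integral_poly (a1 a2 a3 a4 a5 a6 : ℝ) :
    ∫ t in (0:ℝ)..1, (a1*t + a2*t^2 + a3*t^3 + a4*t^4 + a5*t^5 + a6*t^6)
      = a1/2 + a2/3 + a3/4 + a4/5 + a5/6 + a6/7 := by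
  have hd : ∀ t : ℝ, HasDerivAt
      (fun t : ℝ => a1*t^2/2 + a2*t^3/3 + a3*t^4/4 + a4*t^5/5 + a5*t^6/6 + a6*t^7/7)
      (a1*t + a2*t^2 + a3*t^3 + a4*t^4 + a5*t^5 + a6*t^6) t := by
    intro t
    have h := ((((((hasDerivAt_pow 2 t).const_mul (a1/2)).add
      ((hasDerivAt_pow 3 t).const_mul (a2/3))).add
      ((hasDerivAt_pow 4 t).const_mul (a3/4))).add
      ((hasDerivAt_pow 5 t).const_mul (a4/5))).add
      ((hasDerivAt_pow 6 t).const_mul (a5/6))).add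
      ((hasDerivAt_pow 7 t).const_mul (a6/7))
    refine (h.congr_of_eventuallyEq (Filter.Eventually.of_forall fun u => ?_)).congr_deriv ?_
    · simp only [Pi.add_apply]; ring
    · push_cast; ring
  rw [intervalIntegral.integral_eq_sub_of_hasDerivAt (fun t _ => hd t)
    (Continuous.intervalIntegrable (by continuity) 0 1)]
  norm_num

lemma integral_QQ (ε κ : ℝ) :
    ∫ t in (0:ℝ)..1, Qp (ε*t+κ) * Qp t
      = -(legendre2 κ)*ε/60 + (3-6*κ)*ε^2/60 - ε^3/35 := by
  have e1 : (fun t : ℝ => Qp (ε*t+κ) * Qp t) = fun t : ℝ =>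
      (2*κ^3-3*κ^2+κ)*t
      + (-3*(2*κ^3-3*κ^2+κ) + ε*(6*κ^2-6*κ+1))*t^2
      + (2*(2*κ^3-3*κ^2+κ) - 3*ε*(6*κ^2-6*κ+1) + 3*ε^2*(2*κ-1))*t^3
      + (2*ε*(6*κ^2-6*κ+1) - 9*ε^2*(2*κ-1) + 2*ε^3)*t^4
      + (6*ε^2*(2*κ-1) - 6*ε^3)*t^5
      + (4*ε^3)*t^6 := funext fun t => by unfold Qp; ring
  rw [e1, integral_poly]
  unfold legendre2; ring

def Vval (ε κ : ℝ) : ℝ := -(legendre2 κ)*ε/60 + (3-6*κ)*ε^2/60 - ε^3/35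

lemma ALeg_eq_ind (m i : ℕ) : ALeg m i =
    (Icc ((i:ℝ)/2^m) (((i:ℝ)+1)/2^m)).indicator (fun x => (2^m:ℝ)⁻¹ * Qp (2^m*x-i)) :=
  funext fun x => by rw [ALeg_eq]; simp [Set.indicator_apply, Set.mem_Icc]

lemma ALeg_measurable (m i : ℕ) : Measurable (ALeg m i) := by
  rw [ALeg_eq_ind]
  exact Measurable.indicator (by unfold Qp; fun_prop) measurableSet_Icc

lemma ALeg_integrable (m i : ℕ) : Integrable (ALeg m i) := by
  rw [ALeg_eq_ind]
  exact (Continuous.integrableOn_Icc (by unfold Qp; continuity)).integrable_indicator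
    measurableSet_Icc

lemma Qp_abs_le {t : ℝ} (h0 : 0 ≤ t) (h1 : t ≤ 1) : |Qp t| ≤ 1 := by
  rw [abs_le]; constructor <;> [skip; skip] <;> unfold Qp <;> nlinarith [sq_nonneg t, sq_nonneg (1-t)]

lemma ALeg_abs_le (m i : ℕ) (x : ℝ) : |ALeg m i x| ≤ 1 := by
  rw [ALeg_eq]
  split_ifs with h
  · rcases h with ⟨h1, h2⟩
    have hc : (0:ℝ) < 2^m := by positivity
    have t0 : (0:ℝ) ≤ 2^m*x - i := by
      rw [div_le_iff₀ hc] at h1; linarith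
    have t1 : (2:ℝ)^m*x - i ≤ 1 := by
      rw [le_div_iff₀ hc] at h2; linarith
    rw [abs_mul]
    calc |(2^m:ℝ)⁻¹| * |Qp (2^m*x-i)| ≤ 1 * 1 := by
          apply mul_le_mul ?_ (Qp_abs_le t0 t1) (abs_nonneg _) zero_le_one
          rw [abs_of_nonneg (by positivity)]
          exact inv_le_one_of_one_le₀ (one_le_pow₀ one_le_two)
      _ = 1 := by norm_num
  · simp

lemma ALeg_zero_outside {m i : ℕ} {x : ℝ}
    (h : x ≤ (i:ℝ)/2^m ∨ ((i:ℝ)+1)/2^m ≤ x) : ALeg m i x = 0 := by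
  rw [ALeg_eq]
  split_ifs with hx
  · rcases h with h | h
    · have : x = (i:ℝ)/2^m := le_antisymm h hx.1
      have hc : (0:ℝ) < 2^m := by positivity
      have : (2:ℝ)^m*x - i = 0 := by rw [this]; field_simp; ring
      rw [this, Qp_zero, mul_zero]
    · have : x = ((i:ℝ)+1)/2^m := le_antisymm hx.2 h
      have hc : (0:ℝ) < 2^m := by positivity
      have : (2:ℝ)^m*x - i = 1 := by rw [this]; field_simp; ring
      rw [this, Qp_one, mul_zero]
  · rfl

def Jint (m i m' i' : ℕ) : ℝ := ∫ x in Icc (0:ℝ) 1, ALeg m i x * ALeg m' i' x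

lemma cast_div_bounds (i' δ : ℕ) :
    ((i'/2^δ : ℕ):ℝ) * 2^δ ≤ i' ∧ ((i':ℝ)+1) ≤ (((i'/2^δ : ℕ):ℝ)+1) * 2^δ := by
  have h1 := Nat.div_add_mod i' (2^δ)
  have h2 : i' % 2^δ < 2^δ := Nat.mod_lt _ (by positivity)
  constructor
  · exact_mod_cast Nat.div_mul_le_self i' (2^δ)
  · have : i' + 1 ≤ (i'/2^δ + 1) * 2^δ := by
      calc i' + 1 = 2^δ * (i'/2^δ) + i' % 2^δ + 1 := by rw [h1]
        _ ≤ 2^δ * (i'/2^δ) + 2^δ := by omega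
        _ = (i'/2^δ + 1) * 2^δ := by ring
    exact_mod_cast this

lemma Jint_zero_of_ne (m δ i i' : ℕ) (hne : i ≠ i'/2^δ) :
    Jint m i (m+δ) i' = 0 := by
  have h2m : (0:ℝ) < 2^m := by positivity
  have h2m' : (0:ℝ) < 2^(m+δ) := by positivity
  have hpow : (2:ℝ)^(m+δ) = 2^m * 2^δ := by rw [pow_add]
  set q := i'/2^δ with hq
  obtain ⟨hb1, hb2⟩ := cast_div_bounds i' δ
  have hzero : ∀ x : ℝ, ALeg m i x * ALeg (m+δ) i' x = 0 := by
    intro x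
    by_cases hx : x ≤ (i':ℝ)/2^(m+δ) ∨ ((i':ℝ)+1)/2^(m+δ) ≤ x
    · rw [ALeg_zero_outside hx, mul_zero]
    · push_neg at hx
      obtain ⟨hx1, hx2⟩ := hx
      rcases Nat.lt_or_ge i q with h | h
      · have hiq : (i:ℝ) + 1 ≤ q := by exact_mod_cast h
        have : ((i:ℝ)+1)/2^m ≤ x := by
          calc ((i:ℝ)+1)/2^m ≤ (i':ℝ)/2^(m+δ) := by
                rw [div_le_div_iff₀ h2m h2m', hpow]
                nlinarith [pow_pos (two_pos (α := ℝ)) δ, pow_pos (two_pos (α := ℝ)) m]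
            _ ≤ x := hx1.le
        rw [ALeg_zero_outside (Or.inr this), zero_mul]
      · have hiq : (q:ℝ) + 1 ≤ i := by
          have : q < i := lt_of_le_of_ne h (Ne.symm hne)
          exact_mod_cast this
        have : x ≤ (i:ℝ)/2^m := by
          calc x ≤ ((i':ℝ)+1)/2^(m+δ) := hx2.le
            _ ≤ (i:ℝ)/2^m := by
                rw [div_le_div_iff₀ h2m' h2m, hpow]
                nlinarith [pow_pos (two_pos (α := ℝ)) δ, pow_pos (two_pos (α := ℝ)) m]
        rw [ALeg_zero_outside (Or.inl this), zero_mul]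
  unfold Jint
  simp only [hzero, integral_zero]

lemma setIntegral_eq_integral (f : ℝ → ℝ) (s : Set ℝ) (hs : MeasurableSet s)
    (h : ∀ x ∉ s, f x = 0) : ∫ x in s, f x = ∫ x, f x := by
  rw [← integral_indicator hs, Set.indicator_eq_self.mpr]
  intro x hx
  by_contra hxs
  exact hx (h x hxs)

lemma Jint_nested_eq (m δ i' : ℕ) (hi' : i' < 2^(m+δ)) :
    Jint m (i'/2^δ) (m+δ) i' =
      (2^m:ℝ)⁻¹ * ((2^(m+δ):ℝ)⁻¹)^2 *
        Vval ((2^δ:ℝ))⁻¹ (((i' % 2^δ : ℕ):ℝ)/2^δ) := by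
  have h2m : (0:ℝ) < 2^m := by positivity
  have h2δ : (0:ℝ) < 2^δ := by positivity
  have h2m' : (0:ℝ) < 2^(m+δ) := by positivity
  have hpow : (2:ℝ)^(m+δ) = 2^m * 2^δ := by rw [pow_add]
  set q := i'/2^δ with hq
  obtain ⟨hb1, hb2⟩ := cast_div_bounds i' δ
  set a' : ℝ := (i':ℝ)/2^(m+δ) with ha'
  set b' : ℝ := ((i':ℝ)+1)/2^(m+δ) with hb'
  have ha'b' : a' ≤ b' := by rw [ha', hb']; gcongr; linarith
  have ha'0 : 0 ≤ a' := by positivity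
  have hb'1 : b' ≤ 1 := by
    rw [hb', div_le_one h2m']
    have : (i':ℝ) + 1 ≤ 2^(m+δ) := by exact_mod_cast hi'
    linarith
  -- subset facts
  have hqa : ((q:ℝ))/2^m ≤ a' := by
    rw [ha', div_le_div_iff₀ h2m h2m', hpow]; nlinarith
  have hqb : b' ≤ ((q:ℝ)+1)/2^m := by
    rw [hb', div_le_div_iff₀ h2m' h2m, hpow]; nlinarith
  -- the function vanishes outside [a', b']
  have hvanish : ∀ x : ℝ, x ∉ Icc a' b' → ALeg m q x * ALeg (m+δ) i' x = 0 := by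
    intro x hx
    rw [Set.mem_Icc] at hx
    push_neg at hx
    have : x ≤ a' ∨ b' ≤ x := by
      by_cases h : a' ≤ x
      · exact Or.inr (hx h).le
      · exact Or.inl (le_of_not_ge h)
    rw [ALeg_zero_outside this, mul_zero]
  have hIcc01 : ∀ x : ℝ, x ∉ Icc (0:ℝ) 1 → ALeg m q x * ALeg (m+δ) i' x = 0 := by
    intro x hx
    apply hvanish
    rw [Set.mem_Icc] at *
    intro hc
    exact hx ⟨le_trans ha'0 hc.1, le_trans hc.2 hb'1⟩
  set ε : ℝ := ((2:ℝ)^δ)⁻¹ with hε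
  set κ : ℝ := ε * i' - q with hκ
  have hκmod : κ = ((i' % 2^δ : ℕ):ℝ)/2^δ := by
    have h1 := Nat.div_add_mod i' (2^δ)
    have h1' : (2:ℝ)^δ * q + ((i' % 2^δ : ℕ):ℝ) = i' := by exact_mod_cast h1
    rw [hκ, hε, eq_div_iff (ne_of_gt h2δ)]
    field_simp
    linarith
  have key : Jint m q (m+δ) i' = ∫ x in a'..b', ALeg m q x * ALeg (m+δ) i' x := by
    unfold Jint
    rw [setIntegral_eq_integral _ _ measurableSet_Icc hIcc01,
      ← setIntegral_eq_integral _ _ measurableSet_Icc hvanish,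
      integral_Icc_eq_integral_Ioc, ← intervalIntegral.integral_of_le ha'b']
  rw [key]
  have heqon : ∀ x ∈ Set.uIcc a' b', ALeg m q x * ALeg (m+δ) i' x =
      ((2^m:ℝ)⁻¹ * (2^(m+δ):ℝ)⁻¹) * ((fun t => Qp (ε*t+κ) * Qp t) ((2^(m+δ):ℝ)*x - i')) := by
    intro x hx
    rw [Set.uIcc_of_le ha'b', Set.mem_Icc] at hx
    obtain ⟨hx1, hx2⟩ := hx
    rw [ALeg_eq m q x, ALeg_eq (m+δ) i' x,
      if_pos ⟨le_trans hqa hx1, le_trans hx2 hqb⟩, if_pos ⟨hx1, hx2⟩]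
    have harg : (2:ℝ)^m*x - q = ε*((2:ℝ)^(m+δ)*x - i') + κ := by
      rw [hκ, hε, hpow]; field_simp; ring
    rw [harg]; ring
  rw [intervalIntegral.integral_congr heqon, intervalIntegral.integral_const_mul]
  have he1 : (2:ℝ)^(m+δ) * a' - i' = 0 := by rw [ha']; field_simp; ring
  have he2 : (2:ℝ)^(m+δ) * b' - i' = 1 := by rw [hb']; field_simp; ring
  have hcomp := intervalIntegral.integral_comp_mul_sub (a := a') (b := b')
      (f := fun t => Qp (ε*t+κ) * Qp t) (ne_of_gt h2m') ((i':ℝ))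
  rw [he1, he2] at hcomp
  rw [hcomp, smul_eq_mul, integral_QQ ε κ, hκmod]
  unfold Vval
  ring

lemma Vval_one_zero : Vval 1 0 = 1/210 := by
  unfold Vval legendre2; norm_num

lemma abs_Vval_le {ε κ : ℝ} (hε0 : 0 < ε) (hε : ε ≤ 1/16) (hκ0 : 0 ≤ κ) (hκ1 : κ ≤ 1) :
    |Vval ε κ| ≤ ε/50 := by
  have hL1 : legendre2 κ ≤ 1 := by unfold legendre2; nlinarith
  have hL2 : -1 ≤ legendre2 κ := by unfold legendre2; nlinarith [sq_nonneg (2*κ-1)]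
  have h36 : |3-6*κ| ≤ 3 := by rw [abs_le]; constructor <;> linarith
  rw [abs_le]
  constructor <;> unfold Vval <;> nlinarith [sq_nonneg ε, mul_pos hε0 hε0,
    mul_le_mul_of_nonneg_left hε hε0.le, abs_le.mp h36]

def phiw (a b : ℕ) : ℝ := if a = b then 1 else (21/5) * ((2:ℝ)^(max a b - min a b))⁻¹

lemma phiw_nonneg (a b : ℕ) : 0 ≤ phiw a b := by
  unfold phiw; split_ifs <;> positivity

lemma phiw_comm (a b : ℕ) : phiw a b = phiw b a := by
  unfold phiw
  rcases eq_or_ne a b with rfl | h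
  · rfl
  · rw [if_neg h, if_neg (Ne.symm h), max_comm, min_comm]

lemma Jint_comm (m i m' i' : ℕ) : Jint m i m' i' = Jint m' i' m i := by
  unfold Jint; simp_rw [mul_comm]

lemma sum_Jint_le_of_le (m₁ δ : ℕ) (h4 : δ ≠ 0 → 4 ≤ δ) :
    ∑ i ∈ Finset.range (2^m₁), ∑ i' ∈ Finset.range (2^(m₁+δ)), |Jint m₁ i (m₁+δ) i'|
      ≤ (1/210) * ((2^m₁:ℝ))⁻¹ * ((2^(m₁+δ):ℝ))⁻¹ * phiw m₁ (m₁+δ) := by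
  rw [Finset.sum_comm]
  have hterm : ∀ i' ∈ Finset.range (2^(m₁+δ)),
      ∑ i ∈ Finset.range (2^m₁), |Jint m₁ i (m₁+δ) i'|
        ≤ ((2^(m₁+δ):ℝ))⁻¹ * ((1/210) * ((2^m₁:ℝ))⁻¹ * ((2^(m₁+δ):ℝ))⁻¹ * phiw m₁ (m₁+δ)) := by
    intro i' hi'
    rw [Finset.mem_range] at hi'
    have hq : i'/2^δ ∈ Finset.range (2^m₁) := by
      rw [Finset.mem_range]
      apply Nat.div_lt_of_lt_mul
      rw [← pow_add, add_comm]; exact hi'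
    rw [Finset.sum_eq_single_of_mem (i'/2^δ) hq
      (fun i _ hne => by rw [Jint_zero_of_ne m₁ δ i i' hne, abs_zero])]
    rw [Jint_nested_eq m₁ δ i' hi']
    have h2m : (0:ℝ) < 2^m₁ := by positivity
    have h2m' : (0:ℝ) < 2^(m₁+δ) := by positivity
    have h2δ : (0:ℝ) < 2^δ := by positivity
    rcases Nat.eq_zero_or_pos δ with rfl | hδpos
    · have : i' % 2^0 = 0 := Nat.mod_one i'
      rw [this]
      simp only [pow_zero, inv_one, Nat.cast_zero, zero_div]
      rw [Vval_one_zero]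
      have : phiw m₁ (m₁+0) = 1 := by unfold phiw; rw [if_pos (by ring)]
      rw [this]
      rw [abs_of_nonneg (by positivity)]
      ring_nf
      apply le_of_eq; ring
    · have hδ4 := h4 (by omega)
      have hmod : i' % 2^δ < 2^δ := Nat.mod_lt _ (by positivity)
      have hVb : |Vval ((2^δ:ℝ))⁻¹ (((i' % 2^δ : ℕ):ℝ)/2^δ)| ≤ ((2^δ:ℝ))⁻¹/50 := by
        apply abs_Vval_le (by positivity) ?_ (by positivity) ?_
        · have h16 : (16:ℝ) ≤ 2^δ := by
            calc (16:ℝ) = 2^4 := by norm_num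
              _ ≤ 2^δ := by apply pow_le_pow_right₀ one_le_two hδ4
          rw [show (1:ℝ)/16 = (16:ℝ)⁻¹ by norm_num]
          exact inv_anti₀ (by norm_num) h16
        · rw [div_le_one h2δ]
          exact_mod_cast hmod.le
      have hphi : phiw m₁ (m₁+δ) = (21/5) * ((2:ℝ)^δ)⁻¹ := by
        unfold phiw
        rw [if_neg (by omega), max_eq_right (by omega), min_eq_left (by omega)]
        congr 3
        omega
      rw [abs_mul, abs_of_nonneg (by positivity : (0:ℝ) ≤ (2^m₁:ℝ)⁻¹ * ((2^(m₁+δ):ℝ)⁻¹)^2)]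
      calc (2^m₁:ℝ)⁻¹ * ((2^(m₁+δ):ℝ)⁻¹)^2 * |Vval _ _|
          ≤ (2^m₁:ℝ)⁻¹ * ((2^(m₁+δ):ℝ)⁻¹)^2 * (((2^δ:ℝ))⁻¹/50) := by
            apply mul_le_mul_of_nonneg_left hVb (by positivity)
        _ = ((2^(m₁+δ):ℝ))⁻¹ * ((1/210) * ((2^m₁:ℝ))⁻¹ * ((2^(m₁+δ):ℝ))⁻¹ * ((21/5) * ((2:ℝ)^δ)⁻¹)) := by
            ring
        _ = _ := by rw [hphi]
  calc ∑ i' ∈ Finset.range (2^(m₁+δ)), ∑ i ∈ Finset.range (2^m₁), |Jint m₁ i (m₁+δ) i'|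
      ≤ ∑ i' ∈ Finset.range (2^(m₁+δ)),
        ((2^(m₁+δ):ℝ))⁻¹ * ((1/210) * ((2^m₁:ℝ))⁻¹ * ((2^(m₁+δ):ℝ))⁻¹ * phiw m₁ (m₁+δ)) :=
        Finset.sum_le_sum hterm
    _ = (1/210) * ((2^m₁:ℝ))⁻¹ * ((2^(m₁+δ):ℝ))⁻¹ * phiw m₁ (m₁+δ) := by
        rw [Finset.sum_const, Finset.card_range, nsmul_eq_mul]
        push_cast
        field_simp

lemma sum_Jint_le (m₁ m₂ : ℕ) (h4 : m₁ ≠ m₂ → 4 ≤ max m₁ m₂ - min m₁ m₂) :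
    ∑ i ∈ Finset.range (2^m₁), ∑ i' ∈ Finset.range (2^m₂), |Jint m₁ i m₂ i'|
      ≤ (1/210) * ((2^m₁:ℝ))⁻¹ * ((2^m₂:ℝ))⁻¹ * phiw m₁ m₂ := by
  rcases le_total m₁ m₂ with h | h
  · obtain ⟨δ, rfl⟩ := Nat.exists_eq_add_of_le h
    apply sum_Jint_le_of_le
    intro hδ
    have := h4 (by omega)
    omega
  · obtain ⟨δ, rfl⟩ := Nat.exists_eq_add_of_le h
    rw [Finset.sum_comm]
    simp_rw [Jint_comm]
    calc ∑ i ∈ Finset.range (2^m₂), ∑ i' ∈ Finset.range (2^(m₂+δ)), |Jint m₂ i (m₂+δ) i'|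
        ≤ (1/210) * ((2^m₂:ℝ))⁻¹ * ((2^(m₂+δ):ℝ))⁻¹ * phiw m₂ (m₂+δ) := by
          apply sum_Jint_le_of_le
          intro hδ
          have := h4 (by omega)
          omega
      _ = (1/210) * ((2^(m₂+δ):ℝ))⁻¹ * ((2^m₂:ℝ))⁻¹ * phiw (m₂+δ) m₂ := by
          rw [phiw_comm]; ring

abbrev piIcc (d : ℕ) : Set (Fin d → ℝ) := Set.univ.pi (fun _ : Fin d => Set.Icc (0:ℝ) 1)

lemma piIcc_measurable (d : ℕ) : MeasurableSet (piIcc d) :=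
  MeasurableSet.univ_pi (fun _ => measurableSet_Icc)

lemma piIcc_volume_ne_top (d : ℕ) : volume (piIcc d) ≠ ⊤ := by
  rw [volume_pi_pi]; simp

lemma integral_pi_prod (d : ℕ) (f : Fin d → ℝ → ℝ) :
    ∫ x in piIcc d, ∏ j, f j (x j) = ∏ j, ∫ t in Icc (0:ℝ) 1, f j t := by
  rw [← integral_indicator (piIcc_measurable d)]
  have hind : (piIcc d).indicator (fun x => ∏ j, f j (x j))
      = fun x => ∏ j, (Icc (0:ℝ) 1).indicator (f j) (x j) := by
    funext x
    by_cases hx : x ∈ piIcc d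
    · rw [Set.indicator_of_mem hx]
      exact Finset.prod_congr rfl fun j _ =>
        (Set.indicator_of_mem (hx j trivial) _).symm
    · rw [Set.indicator_of_notMem hx]
      symm
      rw [Set.mem_univ_pi] at hx
      push_neg at hx
      obtain ⟨j₀, hj₀⟩ := hx
      exact Finset.prod_eq_zero (Finset.mem_univ j₀) (Set.indicator_of_notMem hj₀ _)
  rw [hind]
  beta_reduce
  rw [MeasureTheory.integral_fintype_prod_volume_eq_prod
    (fun j t => (Icc (0:ℝ) 1).indicator (f j) t)]
  exact Finset.prod_congr rfl fun j _ => integral_indicator measurableSet_Icc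

lemma prodA_integrableOn (d : ℕ) (M M' I I' : Fin d → ℕ) :
    IntegrableOn (fun x : Fin d → ℝ =>
      (∏ j, ALeg (M j) (I j) (x j)) * ∏ j, ALeg (M' j) (I' j) (x j)) (piIcc d) := by
  apply Measure.integrableOn_of_bounded (piIcc_volume_ne_top d)
  · apply Measurable.aestronglyMeasurable
    apply Measurable.mul <;>
      exact Finset.measurable_prod _ (fun j _ => (ALeg_measurable _ _).comp (measurable_pi_apply j))
  · apply ae_of_all
    intro x
    rw [norm_mul]
    have h1 : ∀ (N K : Fin d → ℕ), ‖∏ j, ALeg (N j) (K j) (x j)‖ ≤ 1 := by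
      intro N K
      rw [norm_prod]
      calc ∏ j, ‖ALeg (N j) (K j) (x j)‖ ≤ ∏ _j : Fin d, 1 :=
            Finset.prod_le_prod (fun j _ => norm_nonneg _)
              (fun j _ => by rw [Real.norm_eq_abs]; exact ALeg_abs_le _ _ _)
        _ = 1 := Finset.prod_const_one
    calc ‖∏ j, ALeg (M j) (I j) (x j)‖ * ‖∏ j, ALeg (M' j) (I' j) (x j)‖ ≤ 1 * 1 :=
          mul_le_mul (h1 M I) (h1 M' I') (norm_nonneg _) zero_le_one
      _ = (1:ℝ) := by norm_num

lemma pair_bound (d m : ℕ) (M M' : Fin d → ℕ) (c c' : (Fin d → ℕ) → ℝ)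
    (hc : ∀ I, |c I| ≤ 1) (hc' : ∀ I, |c' I| ≤ 1)
    (hsum : ∑ j, M j = m) (hsum' : ∑ j, M' j = m)
    (h4 : ∀ j, M j ≠ M' j → 4 ≤ max (M j) (M' j) - min (M j) (M' j)) :
    |∫ x in piIcc d, (∑ I ∈ IIset d M, c I * ∏ j, ALeg (M j) (I j) (x j)) *
       (∑ I' ∈ IIset d M', c' I' * ∏ j, ALeg (M' j) (I' j) (x j))|
      ≤ (1/210)^d * ((2:ℝ)^(2*m))⁻¹ * ∏ j, phiw (M j) (M' j) := by
  have expand : ∀ x : Fin d → ℝ,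
      (∑ I ∈ IIset d M, c I * ∏ j, ALeg (M j) (I j) (x j)) *
       (∑ I' ∈ IIset d M', c' I' * ∏ j, ALeg (M' j) (I' j) (x j))
      = ∑ I ∈ IIset d M, ∑ I' ∈ IIset d M', (c I * c' I') *
          ((∏ j, ALeg (M j) (I j) (x j)) * ∏ j, ALeg (M' j) (I' j) (x j)) := by
    intro x
    rw [Finset.sum_mul_sum]
    exact Finset.sum_congr rfl fun I _ => Finset.sum_congr rfl fun I' _ => by ring
  rw [MeasureTheory.setIntegral_congr_ae (piIcc_measurable d)
    (ae_of_all _ (fun x _ => expand x))]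
  rw [MeasureTheory.integral_finset_sum _ (fun I _ =>
    MeasureTheory.integrable_finset_sum _ (fun I' _ =>
      ((prodA_integrableOn d M M' I I').const_mul _)))]
  have hsum_int : ∀ I ∈ IIset d M,
      ∫ x in piIcc d, (∑ I' ∈ IIset d M', (c I * c' I') *
        ((∏ j, ALeg (M j) (I j) (x j)) * ∏ j, ALeg (M' j) (I' j) (x j)))
      = ∑ I' ∈ IIset d M', (c I * c' I') *
        ∫ x in piIcc d, (∏ j, ALeg (M j) (I j) (x j)) * ∏ j, ALeg (M' j) (I' j) (x j) := by
    intro I _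
    rw [MeasureTheory.integral_finset_sum _ (fun I' _ =>
      ((prodA_integrableOn d M M' I I').const_mul _))]
    exact Finset.sum_congr rfl fun I' _ => MeasureTheory.integral_const_mul _ _
  rw [Finset.sum_congr rfl hsum_int]
  have hfub : ∀ (I I' : Fin d → ℕ),
      ∫ x in piIcc d, (∏ j, ALeg (M j) (I j) (x j)) * ∏ j, ALeg (M' j) (I' j) (x j)
        = ∏ j, Jint (M j) (I j) (M' j) (I' j) := by
    intro I I'
    have h := integral_pi_prod d (fun j t => ALeg (M j) (I j) t * ALeg (M' j) (I' j) t)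
    rw [show (fun x : Fin d → ℝ => ∏ j, (ALeg (M j) (I j) (x j) * ALeg (M' j) (I' j) (x j)))
      = (fun x : Fin d → ℝ => (∏ j, ALeg (M j) (I j) (x j)) * ∏ j, ALeg (M' j) (I' j) (x j))
      from funext fun x => Finset.prod_mul_distrib] at h
    unfold Jint
    exact h
  calc |∑ I ∈ IIset d M, ∑ I' ∈ IIset d M', (c I * c' I') *
          ∫ x in piIcc d, (∏ j, ALeg (M j) (I j) (x j)) * ∏ j, ALeg (M' j) (I' j) (x j)|
      ≤ ∑ I ∈ IIset d M, ∑ I' ∈ IIset d M', ∏ j, |Jint (M j) (I j) (M' j) (I' j)| := by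
        apply (Finset.abs_sum_le_sum_abs _ _).trans
        apply Finset.sum_le_sum
        intro I _
        apply (Finset.abs_sum_le_sum_abs _ _).trans
        apply Finset.sum_le_sum
        intro I' _
        rw [hfub I I', abs_mul, abs_mul]
        calc |c I| * |c' I'| * |∏ j, Jint (M j) (I j) (M' j) (I' j)|
            ≤ 1 * 1 * |∏ j, Jint (M j) (I j) (M' j) (I' j)| := by
              apply mul_le_mul_of_nonneg_right ?_ (abs_nonneg _)
              exact mul_le_mul (hc I) (hc' I') (abs_nonneg _) zero_le_one
          _ = |∏ j, Jint (M j) (I j) (M' j) (I' j)| := by ring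
          _ = ∏ j, |Jint (M j) (I j) (M' j) (I' j)| := Finset.abs_prod _ _
    _ = ∏ j, ∑ i ∈ Finset.range (2^(M j)), ∑ i' ∈ Finset.range (2^(M' j)),
          |Jint (M j) i (M' j) i'| := by
        unfold IIset
        symm
        rw [Finset.prod_univ_sum (t := fun j => Finset.range (2^(M j)))
          (f := fun j i => ∑ i' ∈ Finset.range (2^(M' j)), |Jint (M j) i (M' j) i'|)]
        apply Finset.sum_congr rfl
        intro I _
        rw [Finset.prod_univ_sum (t := fun j => Finset.range (2^(M' j)))
          (f := fun j i' => |Jint (M j) (I j) (M' j) i'|)]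
    _ ≤ ∏ j, ((1/210) * ((2^(M j):ℝ))⁻¹ * ((2^(M' j):ℝ))⁻¹ * phiw (M j) (M' j)) := by
        apply Finset.prod_le_prod
        · intro j _
          apply Finset.sum_nonneg
          intro i _
          exact Finset.sum_nonneg fun i' _ => abs_nonneg _
        · intro j _
          exact sum_Jint_le (M j) (M' j) (h4 j)
    _ = (1/210)^d * ((2:ℝ)^(2*m))⁻¹ * ∏ j, phiw (M j) (M' j) := by
        have h1 : ∀ j : Fin d, (1/210) * ((2^(M j):ℝ))⁻¹ * ((2^(M' j):ℝ))⁻¹ * phiw (M j) (M' j)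
            = ((1:ℝ)/210) * (((2:ℝ)^(M j + M' j))⁻¹ * phiw (M j) (M' j)) := fun j => by
          rw [pow_add, mul_inv]; ring
        simp_rw [h1]
        rw [Finset.prod_mul_distrib, Finset.prod_const, Finset.card_univ, Fintype.card_fin,
          Finset.prod_mul_distrib, Finset.prod_inv_distrib, Finset.prod_pow_eq_pow_sum,
          Finset.sum_add_distrib, hsum, hsum', ← two_mul]
        ring

def Kset (d m : ℕ) : Finset ℕ := (Finset.range (m+1)).filter (fun v => 2*d ∣ v)

lemma geom_tail (q : ℝ) (h0 : 0 ≤ q) (h1 : q < 1) (n : ℕ) :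
    ∑ y ∈ Finset.Icc 1 n, q^y ≤ q/(1-q) := by
  have hins : Finset.range (n+1) = insert 0 (Finset.Icc 1 n) := by
    ext y; simp [Finset.mem_Icc, Finset.mem_range]; omega
  have hq1 : (0:ℝ) < 1 - q := by linarith
  have hsum : ∑ y ∈ Finset.range (n+1), q^y = 1 + ∑ y ∈ Finset.Icc 1 n, q^y := by
    rw [hins, Finset.sum_insert (by simp), pow_zero]
  have hgeom : ∑ y ∈ Finset.range (n+1), q^y = (q^(n+1) - 1)/(q - 1) :=
    geom_sum_eq (by linarith) (n+1)
  have heq : (q^(n+1) - 1)/(q - 1) = (1 - q^(n+1))/(1-q) := by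
    rw [div_eq_div_iff (by linarith) (by linarith)]; ring
  have hb : 1 + ∑ y ∈ Finset.Icc 1 n, q^y ≤ 1/(1-q) := by
    rw [← hsum, hgeom, heq]
    gcongr <;> nlinarith [pow_nonneg h0 (n+1)]
  have hqq : q/(1-q) = 1/(1-q) - 1 := by field_simp; ring
  rw [hqq]
  linarith

lemma r_bound (d m a : ℕ) (hd : 2 ≤ d) (ha : 2*d ∣ a) (ham : a ≤ m) :
    ∑ v ∈ (Kset d m).filter (fun v => v ≠ a), phiw a v
      ≤ (42/5) * ((4:ℝ)^d - 1)⁻¹ := by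
  have h4d : (16:ℝ) ≤ (4:ℝ)^d := by
    calc (16:ℝ) = 4^2 := by norm_num
      _ ≤ 4^d := pow_le_pow_right₀ (by norm_num) hd
  set q : ℝ := ((4:ℝ)^d)⁻¹ with hqdef
  have hq0 : 0 ≤ q := by positivity
  have hq1 : q < 1 := by
    rw [hqdef, inv_lt_one_iff₀]; right; linarith
  set s := (Kset d m).filter (fun v => v ≠ a) with hs
  have hmaps : ∀ v ∈ s, (max a v - min a v)/(2*d) ∈ Finset.Icc 1 m := by
    intro v hv
    rw [hs, Finset.mem_filter] at hv
    obtain ⟨hvK, hva⟩ := hv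
    rw [Kset, Finset.mem_filter, Finset.mem_range] at hvK
    obtain ⟨hvm, hvd⟩ := hvK
    have hdD : 2*d ∣ (max a v - min a v) := by
      rcases le_total a v with h | h
      · rw [max_eq_right h, min_eq_left h]; exact Nat.dvd_sub hvd ha
      · rw [max_eq_left h, min_eq_right h]; exact Nat.dvd_sub ha hvd
    have hDpos : 0 < max a v - min a v := by omega
    rw [Finset.mem_Icc]
    constructor
    · exact Nat.one_le_div_iff (by omega) |>.mpr (Nat.le_of_dvd hDpos hdD)
    · calc (max a v - min a v)/(2*d) ≤ max a v - min a v := Nat.div_le_self _ _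
        _ ≤ max a v := by omega
        _ ≤ m := by omega
  rw [← Finset.sum_fiberwise_of_maps_to hmaps]
  have hinner : ∀ y ∈ Finset.Icc 1 m,
      ∑ v ∈ s.filter (fun v => (max a v - min a v)/(2*d) = y), phiw a v
        ≤ 2 * ((21/5) * q^y) := by
    intro y hy
    rw [Finset.mem_Icc] at hy
    have hval : ∀ v ∈ s.filter (fun v => (max a v - min a v)/(2*d) = y),
        phiw a v = (21/5) * q^y := by
      intro v hv
      rw [Finset.mem_filter] at hv
      obtain ⟨hv1, hFy⟩ := hv
      rw [hs, Finset.mem_filter] at hv1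
      obtain ⟨hvK, hva⟩ := hv1
      rw [Kset, Finset.mem_filter, Finset.mem_range] at hvK
      have hdD : 2*d ∣ (max a v - min a v) := by
        rcases le_total a v with h | h
        · rw [max_eq_right h, min_eq_left h]; exact Nat.dvd_sub hvK.2 ha
        · rw [max_eq_left h, min_eq_right h]; exact Nat.dvd_sub ha hvK.2
      have hD : max a v - min a v = 2*d*y := by
        obtain ⟨t, ht⟩ := hdD
        rw [ht] at hFy ⊢
        rw [Nat.mul_div_cancel_left t (by omega)] at hFy
        rw [hFy]
      unfold phiw
      rw [if_neg (Ne.symm hva), hD]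
      congr 1
      have h4 : ((4:ℝ)^d)^y = 2^(2*d*y) := by
        rw [show (4:ℝ) = 2^2 by norm_num, ← pow_mul, ← pow_mul]
        congr 1
        ring
      rw [hqdef, inv_pow, h4]
    have hcard : (s.filter (fun v => (max a v - min a v)/(2*d) = y)).card ≤ 2 := by
      have hsub : s.filter (fun v => (max a v - min a v)/(2*d) = y)
          ⊆ insert (a - 2*d*y) {a + 2*d*y} := by
        intro v hv
        rw [Finset.mem_filter] at hv
        obtain ⟨hv1, hFy⟩ := hv
        rw [hs, Finset.mem_filter] at hv1
        obtain ⟨hvK, hva⟩ := hv1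
        rw [Kset, Finset.mem_filter, Finset.mem_range] at hvK
        have hdD : 2*d ∣ (max a v - min a v) := by
          rcases le_total a v with h | h
          · rw [max_eq_right h, min_eq_left h]; exact Nat.dvd_sub hvK.2 ha
          · rw [max_eq_left h, min_eq_right h]; exact Nat.dvd_sub ha hvK.2
        have hD : max a v - min a v = 2*d*y := by
          obtain ⟨t, ht⟩ := hdD
          rw [ht] at hFy ⊢
          rw [Nat.mul_div_cancel_left t (by omega)] at hFy
          rw [hFy]
        simp only [Finset.mem_insert, Finset.mem_singleton]
        rcases le_total a v with h | h
        · right; rw [max_eq_right h, min_eq_left h] at hD; omega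
        · left; rw [max_eq_left h, min_eq_right h] at hD; omega
      calc _ ≤ (insert (a - 2*d*y) ({a + 2*d*y} : Finset ℕ)).card := Finset.card_le_card hsub
        _ ≤ 2 := by
            apply (Finset.card_insert_le _ _).trans
            simp
    calc ∑ v ∈ s.filter (fun v => (max a v - min a v)/(2*d) = y), phiw a v
        = ∑ v ∈ s.filter (fun v => (max a v - min a v)/(2*d) = y), (21/5) * q^y :=
          Finset.sum_congr rfl hval
      _ = (s.filter (fun v => (max a v - min a v)/(2*d) = y)).card * ((21/5) * q^y) := by
          rw [Finset.sum_const, nsmul_eq_mul]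
      _ ≤ 2 * ((21/5) * q^y) := by
          apply mul_le_mul_of_nonneg_right ?_ (by positivity)
          exact_mod_cast hcard
  calc ∑ y ∈ Finset.Icc 1 m, ∑ v ∈ s.filter (fun v => (max a v - min a v)/(2*d) = y), phiw a v
      ≤ ∑ y ∈ Finset.Icc 1 m, 2 * ((21/5) * q^y) := Finset.sum_le_sum hinner
    _ = (42/5) * ∑ y ∈ Finset.Icc 1 m, q^y := by rw [Finset.mul_sum]; congr 1; funext y; ring
    _ ≤ (42/5) * (q/(1-q)) := by
        apply mul_le_mul_of_nonneg_left (geom_tail q hq0 hq1 m) (by norm_num)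
    _ = (42/5) * ((4:ℝ)^d - 1)⁻¹ := by
        congr 1
        rw [hqdef]
        have hF0 : ((4:ℝ)^d) ≠ 0 := by positivity
        have hF1 : ((4:ℝ)^d) - 1 ≠ 0 := by nlinarith
        field_simp

lemma sigma_bound (d m a : ℕ) (hd : 2 ≤ d) (ha : 2*d ∣ a) (ham : a ≤ m) :
    ∑ v ∈ Kset d m, phiw a v ≤ 1 + (42/5) * ((4:ℝ)^d - 1)⁻¹ := by
  rw [← Finset.sum_filter_add_sum_filter_not (Kset d m) (fun v => v ≠ a)]
  have h2 : ∑ v ∈ (Kset d m).filter (fun v => ¬ v ≠ a), phiw a v ≤ 1 := by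
    have hsub : (Kset d m).filter (fun v => ¬ v ≠ a) ⊆ {a} := by
      intro v hv
      rw [Finset.mem_filter] at hv
      simp only [Finset.mem_singleton]
      omega
    calc ∑ v ∈ (Kset d m).filter (fun v => ¬ v ≠ a), phiw a v
        ≤ ∑ v ∈ ({a} : Finset ℕ), phiw a v :=
          Finset.sum_le_sum_of_subset_of_nonneg hsub (fun v _ _ => phiw_nonneg a v)
      _ = phiw a a := Finset.sum_singleton _ _
      _ = 1 := by unfold phiw; rw [if_pos rfl]
  linarith [r_bound d m a hd ha ham]

lemma two_diffs {d m : ℕ} {M M' : Fin d → ℕ} (hM : M ∈ MMset d m) (hM' : M' ∈ MMset d m)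
    (hne : M' ≠ M) : ∃ j k : Fin d, j ≠ k ∧ M' j ≠ M j ∧ M' k ≠ M k := by
  rw [MMset, Finset.mem_filter] at hM hM'
  have hsM : ∑ j, M j = m := hM.2.1
  have hsM' : ∑ j, M' j = m := hM'.2.1
  obtain ⟨j, hj⟩ := Function.ne_iff.mp hne
  by_contra hcon
  push_neg at hcon
  have hall : ∀ k, k ≠ j → M' k = M k := by
    intro k hk
    by_contra hk2
    exact hk2 (hcon j k (Ne.symm hk) hj)
  have : ∑ k, M' k = ∑ k, M k := hsM'.trans hsM.symm
  rw [← Finset.add_sum_erase _ M' (Finset.mem_univ j),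
    ← Finset.add_sum_erase _ M (Finset.mem_univ j)] at this
  have heq : ∑ k ∈ Finset.univ.erase j, M' k = ∑ k ∈ Finset.univ.erase j, M k := by
    apply Finset.sum_congr rfl
    intro k hk
    exact hall k (Finset.ne_of_mem_erase hk)
  omega

lemma one_add_pow_le (x : ℝ) (hx : 0 ≤ x) : ∀ (n : ℕ), (n:ℝ)*x ≤ 1 →
    (1+x)^n ≤ 1 + (n:ℝ)*x + ((n:ℝ)*x)^2 := by
  intro n
  induction n with
  | zero => intro _; norm_num
  | succ n ih =>
    intro h
    have hn : (n:ℝ)*x ≤ 1 := by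
      have : (n:ℝ) ≤ (n:ℝ)+1 := by linarith
      calc (n:ℝ)*x ≤ ((n:ℝ)+1)*x := by nlinarith
        _ = ((n+1:ℕ):ℝ)*x := by push_cast; ring
        _ ≤ 1 := h
    have ihn := ih hn
    have h1x : (0:ℝ) ≤ 1 + x := by linarith
    calc (1+x)^(n+1) = (1+x)^n * (1+x) := by ring
      _ ≤ (1 + (n:ℝ)*x + ((n:ℝ)*x)^2) * (1+x) := by
          apply mul_le_mul_of_nonneg_right ihn h1x
      _ ≤ 1 + ((n+1:ℕ):ℝ)*x + (((n+1:ℕ):ℝ)*x)^2 := by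
          push_cast
          nlinarith [mul_nonneg (Nat.cast_nonneg n : (0:ℝ) ≤ n) hx, sq_nonneg ((n:ℝ)*x),
            mul_nonneg (mul_nonneg (Nat.cast_nonneg n : (0:ℝ) ≤ n) hx) hx]

lemma nat_21d (d : ℕ) (hd : 3 ≤ d) : 21*d + 1 ≤ 4^d := by
  induction d with
  | zero => omega
  | succ n ih =>
    rcases Nat.lt_or_ge n 3 with h | h
    · interval_cases n <;> simp_all <;> omega
    · have := ih (by omega)
      have h4 : 64 ≤ 4^n := by
        calc (64:ℕ) = 4^3 := by norm_num
          _ ≤ 4^n := Nat.pow_le_pow_right (by norm_num) h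
      calc 21*(n+1) + 1 = (21*n + 1) + 21 := by ring
        _ ≤ 4^n + 21 := by omega
        _ ≤ 4^(n+1) := by
            have : 4^(n+1) = 4 * 4^n := by ring
            omega

lemma MMset_facts {d m : ℕ} {M : Fin d → ℕ} (hM : M ∈ MMset d m) :
    (∑ j, M j = m) ∧ ∀ j, M j ≤ m ∧ 2*d ∣ M j := by
  rw [MMset, Finset.mem_filter] at hM
  obtain ⟨hpi, hsum, hj⟩ := hM
  refine ⟨hsum, fun j => ⟨?_, (hj j).2⟩⟩
  rw [Fintype.mem_piFinset] at hpi
  have := hpi j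
  rw [Finset.mem_range] at this
  omega

lemma sum_w_le (d m : ℕ) (hd : 2 ≤ d) (M : Fin d → ℕ) (hM : M ∈ MMset d m) :
    ∑ M' ∈ (MMset d m).filter (fun M' => M' ≠ M), ∏ j, phiw (M j) (M' j) ≤ 2/3 := by
  obtain ⟨hMsum, hMj⟩ := MMset_facts hM
  have h4d : (16:ℝ) ≤ (4:ℝ)^d := by
    calc (16:ℝ) = 4^2 := by norm_num
      _ ≤ 4^d := pow_le_pow_right₀ (by norm_num) hd
  set X : ℝ := (42/5) * ((4:ℝ)^d - 1)⁻¹ with hXdef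
  have hX0 : 0 ≤ X := by
    rw [hXdef]
    apply mul_nonneg (by norm_num)
    rw [inv_nonneg]
    linarith
  have hXle : X ≤ 14/25 := by
    rw [hXdef]
    have h15 : (15:ℝ) ≤ (4:ℝ)^d - 1 := by linarith
    have : ((4:ℝ)^d - 1)⁻¹ ≤ 15⁻¹ := by
      apply inv_anti₀ (by norm_num) h15
    calc (42/5) * ((4:ℝ)^d - 1)⁻¹ ≤ (42/5) * 15⁻¹ := by
          apply mul_le_mul_of_nonneg_left this (by norm_num)
      _ = 14/25 := by norm_num
  have hw0 : ∀ M' : Fin d → ℕ, 0 ≤ ∏ j, phiw (M j) (M' j) :=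
    fun M' => Finset.prod_nonneg (fun j _ => phiw_nonneg _ _)
  set filt := (MMset d m).filter (fun M' => M' ≠ M) with hfilt
  have cover : ∀ M' ∈ filt, ∏ j, phiw (M j) (M' j)
      ≤ ∑ p ∈ (Finset.univ : Finset (Fin d)).offDiag,
          (if M' p.1 ≠ M p.1 ∧ M' p.2 ≠ M p.2 then ∏ j, phiw (M j) (M' j) else 0) := by
    intro M' hM'
    rw [hfilt, Finset.mem_filter] at hM'
    obtain ⟨j, k, hjk, h1, h2⟩ := two_diffs hM hM'.1 hM'.2
    have hmem : ((j, k) : Fin d × Fin d) ∈ (Finset.univ : Finset (Fin d)).offDiag := by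
      rw [Finset.mem_offDiag]
      exact ⟨Finset.mem_univ _, Finset.mem_univ _, hjk⟩
    have := Finset.single_le_sum (f := fun p : Fin d × Fin d =>
        if M' p.1 ≠ M p.1 ∧ M' p.2 ≠ M p.2 then ∏ j, phiw (M j) (M' j) else 0)
      (fun p _ => by split <;> [exact hw0 M'; exact le_rfl]) hmem
    simpa [if_pos (⟨h1, h2⟩ : M' j ≠ M j ∧ M' k ≠ M k)] using this
  have hperp : ∀ p ∈ (Finset.univ : Finset (Fin d)).offDiag,
      ∑ M' ∈ filt.filter (fun M' => M' p.1 ≠ M p.1 ∧ M' p.2 ≠ M p.2),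
        ∏ j, phiw (M j) (M' j) ≤ X^2 * (1+X)^(d-2) := by
    intro p hp
    rw [Finset.mem_offDiag] at hp
    obtain ⟨-, -, hjk⟩ := hp
    classical
    set t : Fin d → Finset ℕ := fun l =>
      if l = p.1 ∨ l = p.2 then (Kset d m).filter (fun v => v ≠ M l) else Kset d m with ht
    have hsub : filt.filter (fun M' => M' p.1 ≠ M p.1 ∧ M' p.2 ≠ M p.2)
        ⊆ Fintype.piFinset t := by
      intro M' hM'
      rw [Finset.mem_filter] at hM'
      obtain ⟨hM'f, hd1, hd2⟩ := hM'
      rw [hfilt, Finset.mem_filter] at hM'f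
      have hM'mem := hM'f.1
      rw [MMset, Finset.mem_filter] at hM'mem
      obtain ⟨hpi, hsum', hposdvd⟩ := hM'mem
      rw [Fintype.mem_piFinset] at hpi ⊢
      intro l
      have hK : M' l ∈ Kset d m := by
        rw [Kset, Finset.mem_filter]
        exact ⟨hpi l, (hposdvd l).2⟩
      rw [ht]
      dsimp only
      split_ifs with hl
      · rw [Finset.mem_filter]
        refine ⟨hK, ?_⟩
        rcases hl with rfl | rfl
        · exact hd1
        · exact hd2
      · exact hK
    calc ∑ M' ∈ filt.filter (fun M' => M' p.1 ≠ M p.1 ∧ M' p.2 ≠ M p.2),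
          ∏ j, phiw (M j) (M' j)
        ≤ ∑ M' ∈ Fintype.piFinset t, ∏ j, phiw (M j) (M' j) :=
          Finset.sum_le_sum_of_subset_of_nonneg hsub (fun M' _ _ => hw0 M')
      _ = ∏ l, ∑ v ∈ t l, phiw (M l) v :=
          (Finset.prod_univ_sum t (fun l v => phiw (M l) v)).symm
      _ ≤ ∏ l, (if l = p.1 ∨ l = p.2 then X else 1+X) := by
          apply Finset.prod_le_prod
          · intro l _
            exact Finset.sum_nonneg (fun v _ => phiw_nonneg _ _)
          · intro l _
            rw [ht]
            dsimp only
            split_ifs with hl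
            · exact r_bound d m (M l) hd (hMj l).2 (hMj l).1
            · exact sigma_bound d m (M l) hd (hMj l).2 (hMj l).1
      _ = X^2 * (1+X)^(d-2) := by
          rw [Finset.prod_ite, Finset.prod_const, Finset.prod_const]
          have hfil : (Finset.univ.filter (fun l : Fin d => l = p.1 ∨ l = p.2)) = {p.1, p.2} := by
            ext l; simp
          have hc1 : (Finset.univ.filter (fun l : Fin d => l = p.1 ∨ l = p.2)).card = 2 := by
            rw [hfil, Finset.card_insert_of_notMem (by simp [hjk]), Finset.card_singleton]
          have hc2 : (Finset.univ.filter (fun l : Fin d => ¬(l = p.1 ∨ l = p.2))).card = d - 2 := by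
            have := Finset.card_filter_add_card_filter_not
              (s := (Finset.univ : Finset (Fin d))) (p := fun l : Fin d => l = p.1 ∨ l = p.2)
            rw [Finset.card_univ, Fintype.card_fin] at this
            omega
          rw [hc1, hc2]
  have hcard : (Finset.univ : Finset (Fin d)).offDiag.card = d*d - d := by
    rw [Finset.offDiag_card, Finset.card_univ, Fintype.card_fin]
  calc ∑ M' ∈ filt, ∏ j, phiw (M j) (M' j)
      ≤ ∑ M' ∈ filt, ∑ p ∈ (Finset.univ : Finset (Fin d)).offDiag,
          (if M' p.1 ≠ M p.1 ∧ M' p.2 ≠ M p.2 then ∏ j, phiw (M j) (M' j) else 0) :=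
        Finset.sum_le_sum cover
    _ = ∑ p ∈ (Finset.univ : Finset (Fin d)).offDiag, ∑ M' ∈ filt,
          (if M' p.1 ≠ M p.1 ∧ M' p.2 ≠ M p.2 then ∏ j, phiw (M j) (M' j) else 0) :=
        Finset.sum_comm
    _ = ∑ p ∈ (Finset.univ : Finset (Fin d)).offDiag,
          ∑ M' ∈ filt.filter (fun M' => M' p.1 ≠ M p.1 ∧ M' p.2 ≠ M p.2),
            ∏ j, phiw (M j) (M' j) := by
        apply Finset.sum_congr rfl
        intro p _
        exact (Finset.sum_filter _ _).symm
    _ ≤ ∑ _p ∈ (Finset.univ : Finset (Fin d)).offDiag, X^2 * (1+X)^(d-2) :=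
        Finset.sum_le_sum hperp
    _ = ((d*d - d : ℕ):ℝ) * (X^2 * (1+X)^(d-2)) := by
        rw [Finset.sum_const, hcard, nsmul_eq_mul]
    _ ≤ 2/3 := by
        rcases eq_or_lt_of_le hd with heq | hlt
        · -- d = 2
          rw [← heq]
          have h1 : ((2*2 - 2 : ℕ):ℝ) = 2 := by norm_num
          have h2 : (2:ℕ) - 2 = 0 := rfl
          rw [h1, h2, pow_zero, mul_one]
          nlinarith
        · -- 3 ≤ d
          have h3 : 3 ≤ d := hlt
          have h21 : (21:ℝ)*d + 1 ≤ (4:ℝ)^d := by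
            have := nat_21d d h3
            have hc : ((21*d + 1 : ℕ):ℝ) ≤ (((4:ℕ)^d : ℕ):ℝ) := Nat.cast_le.mpr this
            push_cast at hc
            linarith
          have hF : (0:ℝ) < (4:ℝ)^d - 1 := by linarith
          have hy : (d:ℝ)*X ≤ 2/5 := by
            have hXexp : (d:ℝ)*X = (42/5*d) * ((4:ℝ)^d - 1)⁻¹ := by rw [hXdef]; ring
            rw [hXexp, mul_inv_le_iff₀ hF]
            linarith
          have hy0 : 0 ≤ (d:ℝ)*X := mul_nonneg (Nat.cast_nonneg d) hX0
          have hpowb : (1+X)^(d-2) ≤ 1 + (d:ℝ)*X + ((d:ℝ)*X)^2 := by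
            calc (1+X)^(d-2) ≤ (1+X)^d :=
                pow_le_pow_right₀ (by linarith) (Nat.sub_le d 2)
              _ ≤ 1 + (d:ℝ)*X + ((d:ℝ)*X)^2 :=
                one_add_pow_le X hX0 d (by linarith)
          have hcard_le : ((d*d - d : ℕ):ℝ) ≤ (d:ℝ)*(d:ℝ) := by
            have : ((d*d - d : ℕ):ℝ) ≤ ((d*d : ℕ):ℝ) := Nat.cast_le.mpr (Nat.sub_le _ _)
            push_cast at this
            linarith
          have hXpow0 : (0:ℝ) ≤ (1+X)^(d-2) := pow_nonneg (by linarith) _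
          calc ((d*d - d : ℕ):ℝ) * (X^2 * (1+X)^(d-2))
              ≤ ((d:ℝ)*(d:ℝ)) * (X^2 * (1 + (d:ℝ)*X + ((d:ℝ)*X)^2)) := by
                apply mul_le_mul hcard_le ?_ (by positivity) (by positivity)
                exact mul_le_mul_of_nonneg_left hpowb (sq_nonneg X)
            _ = ((d:ℝ)*X)^2 * (1 + (d:ℝ)*X + ((d:ℝ)*X)^2) := by ring
            _ ≤ 2/3 := by
                set y := (d:ℝ)*X with hydef
                have h2 : y^2 ≤ 4/25 := by nlinarith
                have h3 : y^3 ≤ 8/125 := by nlinarith [mul_nonneg hy0 hy0]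
                have h4 : y^4 ≤ 16/625 := by
                  nlinarith [mul_nonneg (mul_nonneg hy0 hy0) hy0, sq_nonneg y]
                nlinarith [h2, h3, h4]

lemma coeff_abs_le (a b : ℝ) (ha : a = 0 ∨ a = 1) (hb : b = 0 ∨ b = 1) : |a - b| ≤ 1 := by
  rcases ha with rfl | rfl <;> rcases hb with rfl | rfl <;> norm_num

lemma h4_of {d : ℕ} (hd : 2 ≤ d) {a b : ℕ} (ha : 2*d ∣ a) (hb : 2*d ∣ b) (hne : a ≠ b) :
    4 ≤ max a b - min a b := by
  rcases le_total a b with h | h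
  · rw [max_eq_right h, min_eq_left h]
    have hdvd : 2*d ∣ b - a := Nat.dvd_sub hb ha
    have : 2*d ≤ b - a := Nat.le_of_dvd (by omega) hdvd
    omega
  · rw [max_eq_left h, min_eq_right h]
    have hdvd : 2*d ∣ a - b := Nat.dvd_sub ha hb
    have : 2*d ≤ a - b := Nat.le_of_dvd (by omega) hdvd
    omega

/-- Lemma: bound on the cross-product term `(**)` in the minimax lower bound proof. -/
theorem legendre_cross_product_bound (d : ℕ) (hd : 0 < d) (m : ℕ) (hm : 0 < m)
    (α β : (Fin d → ℕ) → (Fin d → ℕ) → ℝ)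
    (hα : ∀ M I, α M I = 0 ∨ α M I = 1) (hβ : ∀ M I, β M I = 0 ∨ β M I = 1) :
    |(1 / ((MMset d m).card : ℝ) ^ 2) *
      ∑ M ∈ MMset d m, ∑ M' ∈ MMset d m,
        (if M ≠ M' then
          ∫ x in Set.univ.pi (fun _ : Fin d => Set.Icc (0 : ℝ) 1),
            (∑ I ∈ IIset d M, (α M I - β M I) * ∏ j, ALeg (M j) (I j) (x j)) *
            (∑ I' ∈ IIset d M', (α M' I' - β M' I') * ∏ j, ALeg (M' j) (I' j) (x j))
        else 0)|
      ≤ (2 / 3) * (1 / 210) ^ d * ((2 : ℝ) ^ (2 * m))⁻¹ / ((MMset d m).card : ℝ) := by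
  by_cases hd1 : d = 1
  · subst hd1
    have huniq : ∀ M ∈ MMset 1 m, ∀ M' ∈ MMset 1 m, M = M' := by
      intro M hM M' hM'
      have h1 := (MMset_facts hM).1
      have h2 := (MMset_facts hM').1
      rw [Fin.sum_univ_one] at h1 h2
      funext j
      have : j = 0 := Subsingleton.elim j 0
      rw [this, h1, h2]
    have hzero : (∑ M ∈ MMset 1 m, ∑ M' ∈ MMset 1 m,
        (if M ≠ M' then
          ∫ x in Set.univ.pi (fun _ : Fin 1 => Set.Icc (0 : ℝ) 1),
            (∑ I ∈ IIset 1 M, (α M I - β M I) * ∏ j, ALeg (M j) (I j) (x j)) *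
            (∑ I' ∈ IIset 1 M', (α M' I' - β M' I') * ∏ j, ALeg (M' j) (I' j) (x j))
        else 0)) = 0 := by
      apply Finset.sum_eq_zero
      intro M hM
      apply Finset.sum_eq_zero
      intro M' hM'
      rw [if_neg]
      intro h
      exact h (huniq M hM M' hM')
    rw [hzero, mul_zero, abs_zero]
    positivity
  · have hd2 : 2 ≤ d := by omega
    set F : (Fin d → ℕ) → (Fin d → ℕ) → ℝ := fun M M' =>
      (if M ≠ M' then
        ∫ x in Set.univ.pi (fun _ : Fin d => Set.Icc (0 : ℝ) 1),
          (∑ I ∈ IIset d M, (α M I - β M I) * ∏ j, ALeg (M j) (I j) (x j)) *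
          (∑ I' ∈ IIset d M', (α M' I' - β M' I') * ∏ j, ALeg (M' j) (I' j) (x j))
      else 0) with hF
    show |(1 / ((MMset d m).card : ℝ) ^ 2) * ∑ M ∈ MMset d m, ∑ M' ∈ MMset d m, F M M'|
      ≤ (2 / 3) * (1 / 210) ^ d * ((2 : ℝ) ^ (2 * m))⁻¹ / ((MMset d m).card : ℝ)
    by_cases hc0 : (MMset d m).card = 0
    · have hemp : MMset d m = ∅ := Finset.card_eq_zero.mp hc0
      rw [hemp]
      simp
    · have hcpos : (0:ℝ) < ((MMset d m).card : ℝ) := by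
        exact_mod_cast Nat.pos_of_ne_zero hc0
      set Kd : ℝ := (1/210)^d * ((2:ℝ)^(2*m))⁻¹ with hKd
      have hKd0 : 0 ≤ Kd := by positivity
      have hbound : ∀ M ∈ MMset d m, (∑ M' ∈ MMset d m, |F M M'|) ≤ Kd * (2/3) := by
        intro M hM
        obtain ⟨hMsum, hMfacts⟩ := MMset_facts hM
        have step1 : ∀ M' ∈ MMset d m,
            |F M M'| ≤ (if M' ≠ M then Kd * ∏ j, phiw (M j) (M' j) else 0) := by
          intro M' hM'
          obtain ⟨hM'sum, hM'facts⟩ := MMset_facts hM'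
          rcases eq_or_ne M M' with rfl | hne
          · simp [hF]
          · rw [hF]
            dsimp only
            rw [if_pos hne, if_pos (Ne.symm hne)]
            have h4 : ∀ j, M j ≠ M' j → 4 ≤ max (M j) (M' j) - min (M j) (M' j) :=
              fun j hj => h4_of hd2 (hMfacts j).2 (hM'facts j).2 hj
            have hpb := pair_bound d m M M' (fun I => α M I - β M I) (fun I' => α M' I' - β M' I')
              (fun I => coeff_abs_le _ _ (hα M I) (hβ M I))
              (fun I' => coeff_abs_le _ _ (hα M' I') (hβ M' I'))
              hMsum hM'sum h4
            calc _ ≤ (1/210)^d * ((2:ℝ)^(2*m))⁻¹ * ∏ j, phiw (M j) (M' j) := hpb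
              _ = Kd * ∏ j, phiw (M j) (M' j) := by rw [hKd]
        calc (∑ M' ∈ MMset d m, |F M M'|)
            ≤ ∑ M' ∈ MMset d m, (if M' ≠ M then Kd * ∏ j, phiw (M j) (M' j) else 0) :=
              Finset.sum_le_sum step1
          _ = ∑ M' ∈ (MMset d m).filter (fun M' => M' ≠ M), Kd * ∏ j, phiw (M j) (M' j) :=
              (Finset.sum_filter _ _).symm
          _ = Kd * ∑ M' ∈ (MMset d m).filter (fun M' => M' ≠ M), ∏ j, phiw (M j) (M' j) :=
              (Finset.mul_sum _ _ _).symm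
          _ ≤ Kd * (2/3) :=
              mul_le_mul_of_nonneg_left (sum_w_le d m hd2 M hM) hKd0
      have habs : |∑ M ∈ MMset d m, ∑ M' ∈ MMset d m, F M M'|
          ≤ ((MMset d m).card : ℝ) * (Kd * (2/3)) := by
        calc |∑ M ∈ MMset d m, ∑ M' ∈ MMset d m, F M M'|
            ≤ ∑ M ∈ MMset d m, |∑ M' ∈ MMset d m, F M M'| :=
              Finset.abs_sum_le_sum_abs _ _
          _ ≤ ∑ M ∈ MMset d m, ∑ M' ∈ MMset d m, |F M M'| :=
              Finset.sum_le_sum (fun M _ => Finset.abs_sum_le_sum_abs _ _)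
          _ ≤ ∑ _M ∈ MMset d m, Kd * (2/3) := Finset.sum_le_sum hbound
          _ = ((MMset d m).card : ℝ) * (Kd * (2/3)) := by
              rw [Finset.sum_const, nsmul_eq_mul]
      rw [abs_mul]
      have h1c : |1 / ((MMset d m).card : ℝ)^2| = 1 / ((MMset d m).card : ℝ)^2 :=
        abs_of_nonneg (by positivity)
      rw [h1c]
      calc 1 / ((MMset d m).card : ℝ)^2 * |∑ M ∈ MMset d m, ∑ M' ∈ MMset d m, F M M'|
          ≤ 1 / ((MMset d m).card : ℝ)^2 * (((MMset d m).card : ℝ) * (Kd * (2/3))) := by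
            apply mul_le_mul_of_nonneg_left habs (by positivity)
        _ = (2/3) * (1/210)^d * ((2:ℝ)^(2*m))⁻¹ / ((MMset d m).card : ℝ) := by
            rw [hKd]
            field_simp


end
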